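/- arXiv:0811.0290 — 7 statements merged into one kernel-verified Lean document; each statement's English description precedes it below -/
import Mathlib

section
/- For every odd positive integer c, the sequence a^{(c)}(n) = 2·m_2(n) + c contains infinitely many composite numbers; that is, the set of n ∈ ℕ for which 2·m_2(n) + c is composite (greater than 1 and not prime) is infinite. -/
/-- Moser function `m_r(n)`: reinterpret the base-`r` digits of `n` as base-`r²` digits,
i.e. `m_r(n) = Σ_i ν_i r^(2i)` where `n = Σ_i ν_i r^i` is the base-`r` expansion. -/
def moser (r n : ℕ) : ℕ := Nat.ofDigits (r ^ 2) (Nat.digits r n)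

/-- `s^(r)_n = r · m_r(n−1) + 1` for `n ≥ 1`. -/
def moserS (r n : ℕ) : ℕ := r * moser r (n - 1) + 1

/-- The `i`-th base-`r` digit of `n` (0 if beyond the expansion). -/
def dig (r n i : ℕ) : ℕ := (Nat.digits r n).getD i 0

/-- Josephus–Groër survivor function: with `M = N` if `N` is odd, `M = N − 1` otherwise,
and `M = Σ_j b_j 2^j` the binary expansion, `W(N) = 1 + Σ_{j odd} b_j 2^j`. -/
def W (N : ℕ) : ℕ :=
  let M := if N % 2 = 1 then N else N - 1
  1 + ((((Nat.digits 2 M).zipIdx.map Prod.swap).filter (fun p => p.1 % 2 = 1)).map (fun p => p.2 * 2 ^ p.1)).sum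

/-!
Write `N_j = 2^j - 1`, whose binary digits are `j` ones. Since `4 ≡ 1 [MOD 3]`, the Moser function
preserves the binary digit sum modulo `3`, so `m_2(N_j) ≡ j [MOD 3]`. Choosing `j ≡ c [MOD 3]` makes
`2·m_2(N_j) + c ≡ 3c ≡ 0 [MOD 3]`, and this number exceeds `3` as soon as `j ≥ 2`.
-/

theorem Nat.digits_base_pow_sub_one {b : ℕ} (hb : 1 < b) (j : ℕ) :
    Nat.digits b (b ^ j - 1) = List.replicate j (b - 1) := by
  induction j with
  | zero => simp
  | succ j ih =>
    have hsplit : b ^ (j + 1) - 1 = (b - 1) + b * (b ^ j - 1) := by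
      have := Nat.le_mul_of_pos_right b (Nat.pow_pos (n := j) (by omega : 0 < b))
      rw [pow_succ', Nat.mul_sub_one]
      omega
    rw [hsplit, Nat.digits_add b hb _ _ (by omega) (Or.inl (by omega)), ih, List.replicate_succ]

theorem le_moser (r n : ℕ) : n ≤ moser r n := by
  conv_lhs => rw [← Nat.ofDigits_digits r n]
  exact Nat.ofDigits_monotone _ (Nat.le_self_pow two_ne_zero r)

theorem moser_modEq_digits_sum {r : ℕ} (hr : 2 ≤ r) (n : ℕ) :
    moser r n ≡ (Nat.digits r n).sum [MOD r ^ 2 - 1] := by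
  have hmod : r ^ 2 % (r ^ 2 - 1) = 1 := by
    have : 4 ≤ r ^ 2 := by nlinarith
    rw [Nat.mod_eq_sub_mod (by omega), Nat.sub_sub_self (by omega), Nat.one_mod_eq_one]
    omega
  have := Nat.ofDigits_modEq (r ^ 2) (r ^ 2 - 1) (Nat.digits r n)
  rwa [hmod, Nat.ofDigits_one] at this

theorem moser_two_pow_sub_one_modEq (j : ℕ) : moser 2 (2 ^ j - 1) ≡ j [MOD 3] := by
  simpa [Nat.digits_base_pow_sub_one one_lt_two] using moser_modEq_digits_sum le_rfl (2 ^ j - 1)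

theorem moser_infinitely_many_composites_general (c : ℕ) :
    {n : ℕ | 1 < 2 * moser 2 n + c ∧ ¬ Nat.Prime (2 * moser 2 n + c)}.Infinite := by
  have hinj : Function.Injective fun t : ℕ => 2 ^ (3 * t + c + 3) - 1 := by
    intro a b hab
    have := Nat.pow_right_injective le_rfl
      (Nat.sub_one_cancel (Nat.two_pow_pos _) (Nat.two_pow_pos _) hab)
    omega
  refine Set.infinite_of_injective_forall_mem hinj fun t => ?_
  have h8 : 2 ^ 3 ≤ 2 ^ (3 * t + c + 3) := Nat.pow_le_pow_right two_pos (by omega)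
  have hmod : moser 2 (2 ^ (3 * t + c + 3) - 1) % 3 = (3 * t + c + 3) % 3 :=
    moser_two_pow_sub_one_modEq _
  have hle := le_moser 2 (2 ^ (3 * t + c + 3) - 1)
  have hdvd : 3 ∣ 2 * moser 2 (2 ^ (3 * t + c + 3) - 1) + c := by omega
  have hbig : 3 < 2 * moser 2 (2 ^ (3 * t + c + 3) - 1) + c := by omega
  exact ⟨by omega, Nat.not_prime_of_dvd_of_lt hdvd (by norm_num) hbig⟩

/-- For every odd positive `c`, the set of `n` with `2·m_2(n) + c` composite is infinite. -/
theorem moser_infinitely_many_composites (c : ℕ) (hc : Odd c) (hc0 : 0 < c) :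
    {n : ℕ | 1 < 2 * moser 2 n + c ∧ ¬ Nat.Prime (2 * moser 2 n + c)}.Infinite :=
  moser_infinitely_many_composites_general c
end

section
/- There is no set T of prime numbers and no constant C such that every odd integer m ≥ C is expressible as a sum m = p + 2q with p, q ∈ T in exactly one way; that is, for every set T of primes and every C there exists an odd m ≥ C for which the number of pairs (p, q) ∈ T × T with m = p + 2q is not equal to 1. -/
/-!
Suppose every odd `m ≥ C` is `p + 2q` with `p, q ∈ T` in exactly one way, and weigh `n` by `tⁿ` for
some `t < 1` close to `1`. Let `Pᵢ = ∑ tᵖ` over odd `p ∈ T` with `p ≡ i (mod 3)` and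
`Qⱼ = ∑ t^(2q)` over `q ∈ T` with `q ≡ j (mod 3)`; a pair counted in `Pᵢ Qⱼ` has
`p + 2q ≡ i - j (mod 3)`. Existence and uniqueness of representations say that, for each odd
residue `ρ` mod `6`, `∑ⱼ P_{ρ+j} Qⱼ` agrees with `∑_{m ≥ C, m ≡ ρ (6)} tᵐ ≈ X = ∑ t^(6k)` up to the
at most `C²` pairs with `p + 2q < C`. Only the prime `3` lies in the classes `0`, so `P₀, Q₀ ≤ 1`,
and the classes `ρ = 1, 5, 3` give `P₂Q₁ ≈ X`, `P₁Q₂ ≈ X` and `P₁Q₁ + P₂Q₂ ≲ X`. By AM-GM,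
`X² ≈ (P₂Q₁)(P₁Q₂) = (P₁Q₁)(P₂Q₂) ≤ (P₁Q₁ + P₂Q₂)² / 4 ≲ X² / 4`, a contradiction as soon as the
error terms `P₁ + P₂ + Q₁ + Q₂` are small compared with `X`. They are, because
`(P₁ + P₂)(Q₁ + Q₂) ≲ 3X` while both factors are large once `T` is infinite and `t` is close to `1`.
-/

open scoped ENNReal NNReal
open Set Filter Topology

namespace ENNReal

theorem four_mul_le_sq_add (a b : ℝ≥0∞) : 4 * a * b ≤ (a + b) ^ 2 := by
  rcases eq_or_ne a ∞ with rfl | ha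
  · simp
  rcases eq_or_ne b ∞ with rfl | hb
  · simp
  lift a to ℝ≥0 using ha
  lift b to ℝ≥0 using hb
  exact_mod_cast _root_.four_mul_le_sq_add a b

variable {α β : Type*}

theorem tsum_indicator_le_add_of_subset {f : α → ℝ≥0∞} {S S₁ S₂ : Set α} (h : S ⊆ S₁ ∪ S₂) :
    ∑' a, S.indicator f a ≤ ∑' a, S₁.indicator f a + ∑' a, S₂.indicator f a := by
  rw [← ENNReal.tsum_add]
  refine ENNReal.tsum_le_tsum fun a => ?_
  calc S.indicator f a ≤ (S₁ ∪ S₂).indicator f a :=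
        indicator_le_indicator_of_subset h (fun _ => zero_le) a
    _ ≤ (S₁ ∪ S₂).indicator f a + (S₁ ∩ S₂).indicator f a := le_self_add
    _ = S₁.indicator f a + S₂.indicator f a := congrFun (indicator_union_add_inter f S₁ S₂) a

theorem tsum_indicator_comp_le {σ : α → β} {S : Set α} {V : Set β}
    (hinj : InjOn σ S) (hmaps : MapsTo σ S V) (f : β → ℝ≥0∞) :
    ∑' a, S.indicator (f ∘ σ) a ≤ ∑' b, V.indicator f b := by
  rw [← tsum_subtype, ← tsum_subtype]
  exact tsum_comp_le_tsum_of_injective (hmaps.restrict_inj.mpr hinj) fun b : V => f b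

theorem tsum_indicator_le_comp [Nonempty α] {σ : α → β} {S : Set α} {V : Set β}
    (hsurj : SurjOn σ S V) (f : β → ℝ≥0∞) :
    ∑' b, V.indicator f b ≤ ∑' a, S.indicator (f ∘ σ) a := by
  have hinv := hsurj.rightInvOn_invFunOn
  calc ∑' b, V.indicator f b = ∑' b, V.indicator ((f ∘ σ) ∘ Function.invFunOn σ S) b := by
        rw [indicator_congr fun b hb => congrArg f (hinv hb).symm]
        rfl
    _ ≤ _ := tsum_indicator_comp_le hinv.injOn hsurj.mapsTo_invFunOn _

end ENNReal

theorem exists_lt_one_three_le_four_mul_pow (N : ℕ) : ∃ t : ℝ≥0∞, t < 1 ∧ 3 ≤ 4 * t ^ N := by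
  have hlim : Tendsto (fun t : ℝ≥0∞ => 4 * t ^ N) (𝓝[<] 1) (𝓝 (4 * 1 ^ N)) :=
    ENNReal.Tendsto.const_mul ((ENNReal.continuous_pow N).tendsto 1 |>.mono_left nhdsWithin_le_nhds)
      (Or.inr ENNReal.ofNat_ne_top)
  have : (𝓝[<] (1 : ℝ≥0∞)).NeBot := nhdsLT_neBot_of_exists_lt ⟨0, zero_lt_one⟩
  exact (eventually_mem_nhdsWithin.and (hlim.eventually_const_le (by norm_num))).exists

noncomputable def genFun (t : ℝ≥0∞) (A : Set ℕ) : ℝ≥0∞ := ∑' n, A.indicator (t ^ ·) n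

def addTwoMul (pq : ℕ × ℕ) : ℕ := pq.1 + 2 * pq.2

noncomputable def pairGenFun (t : ℝ≥0∞) (S : Set (ℕ × ℕ)) : ℝ≥0∞ :=
  ∑' pq, S.indicator ((t ^ ·) ∘ addTwoMul) pq

section GenFun

variable {t : ℝ≥0∞}

theorem genFun_mono {A B : Set ℕ} (h : A ⊆ B) : genFun t A ≤ genFun t B :=
  ENNReal.tsum_le_tsum fun n => indicator_le_indicator_of_subset h (fun _ => zero_le) n

theorem genFun_union_le (A B : Set ℕ) : genFun t (A ∪ B) ≤ genFun t A + genFun t B :=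
  ENNReal.tsum_indicator_le_add_of_subset subset_rfl

theorem genFun_univ_ne_zero : genFun t univ ≠ 0 := by
  simp [genFun]

theorem genFun_univ_ne_top (ht : t < 1) : genFun t univ ≠ ∞ := by
  simpa [genFun] using tsum_geometric_lt_top.mpr ht |>.ne

theorem genFun_le_one (ht : t ≤ 1) {A : Set ℕ} {a : ℕ} (hA : A ⊆ {a}) : genFun t A ≤ 1 := by
  refine (genFun_mono hA).trans ?_
  rw [genFun, ← tsum_subtype, tsum_singleton]
  exact pow_le_one₀ zero_le ht

theorem genFun_Iio_le (ht : t ≤ 1) (C : ℕ) : genFun t (Iio C) ≤ C := by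
  calc genFun t (Iio C) = ∑ n ∈ Finset.range C, (Iio C).indicator (t ^ ·) n :=
        tsum_eq_sum fun n hn => indicator_of_notMem (by simpa using hn) _
    _ ≤ ∑ _n ∈ Finset.range C, 1 :=
        Finset.sum_le_sum fun n _ => (indicator_le_self _ _ n).trans (pow_le_one₀ zero_le ht)
    _ = C := by simp

theorem natCast_le_genFun {A : Set ℕ} {F : Finset ℕ} {N n : ℕ} (ht : t ≤ 1)
    (htN : 3 ≤ 4 * t ^ N) (hFA : ↑F ⊆ A) (hFN : ∀ x ∈ F, x ≤ N) (hn : 4 * n ≤ 3 * F.card) :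
    (n : ℝ≥0∞) ≤ genFun t A := by
  rw [← ENNReal.mul_le_mul_iff_right (a := 4) (by norm_num) (by norm_num)]
  calc 4 * (n : ℝ≥0∞) ≤ ∑ _x ∈ F, 3 := by
        rw [Finset.sum_const, nsmul_eq_mul, mul_comm _ (3 : ℝ≥0∞)]
        exact_mod_cast hn
    _ ≤ ∑ x ∈ F, 4 * A.indicator (t ^ ·) x := Finset.sum_le_sum fun x hx => by
        rw [indicator_of_mem (hFA hx)]
        exact htN.trans (by gcongr 4 * ?_; exact pow_le_pow_of_le_one zero_le ht (hFN x hx))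
    _ ≤ 4 * genFun t A := by rw [← Finset.mul_sum]; gcongr; exact ENNReal.sum_le_tsum F

theorem genFun_mod_eq_le {n : ℕ} (ht : t ≤ 1) (ρ : ℕ) :
    genFun t {m | m % n = ρ} ≤ genFun (t ^ n) univ := by
  calc genFun t {m | m % n = ρ}
      ≤ ∑' m, {m | m % n = ρ}.indicator (((t ^ n) ^ ·) ∘ (· / n)) m :=
        ENNReal.tsum_le_tsum fun m => indicator_le_indicator <| by
          simpa only [Function.comp, ← pow_mul] using
            pow_le_pow_of_le_one zero_le ht (Nat.mul_div_le m n)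
    _ ≤ genFun (t ^ n) univ := ENNReal.tsum_indicator_comp_le (fun m hm m' hm' h => by
          rw [← Nat.div_add_mod m n, ← Nat.div_add_mod m' n, hm, hm', h]) (mapsTo_univ _ _) _

theorem pow_mul_genFun_univ_le {n C c ρ : ℕ} (hn : 0 < n) (hc : C ≤ c) (hcρ : c % n = ρ) :
    t ^ c * genFun (t ^ n) univ ≤ genFun t {m | C ≤ m ∧ m % n = ρ} := by
  calc t ^ c * genFun (t ^ n) univ = ∑' k, univ.indicator ((t ^ ·) ∘ (c + n * ·)) k := by
        simp only [genFun, indicator_univ, ← ENNReal.tsum_mul_left, Function.comp, pow_add, pow_mul]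
    _ ≤ _ := by
        refine ENNReal.tsum_indicator_comp_le (V := {m | C ≤ m ∧ m % n = ρ})
          (fun k _ k' _ h => by simpa [hn.ne'] using h)
          (fun k _ => ⟨hc.trans (Nat.le_add_right c _), ?_⟩) _
        simp [Nat.add_mul_mod_self_left, hcρ]

theorem pairGenFun_prod (A B : Set ℕ) :
    pairGenFun t (A ×ˢ B) = genFun t A * genFun (t ^ 2) B := by
  rw [pairGenFun, ENNReal.tsum_prod', genFun, genFun, ← ENNReal.tsum_mul_right]
  congr with p
  rw [← ENNReal.tsum_mul_left]
  congr with q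
  by_cases hp : p ∈ A <;> by_cases hq : q ∈ B <;> simp [hp, hq, addTwoMul, pow_add, pow_mul]

theorem pairGenFun_le_genFun_add (ht : t ≤ 1) {S : Set (ℕ × ℕ)} {V : Set ℕ} {C : ℕ}
    (hinj : InjOn addTwoMul {pq ∈ S | C ≤ addTwoMul pq}) (hmaps : MapsTo addTwoMul S V) :
    pairGenFun t S ≤ genFun t V + C * C := by
  have hS : S ⊆ {pq ∈ S | C ≤ addTwoMul pq} ∪ Iio C ×ˢ Iio C := fun pq hpq => by
    by_cases h : C ≤ addTwoMul pq
    · exact Or.inl ⟨hpq, h⟩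
    · right; simp only [addTwoMul, not_le] at h; simp only [mem_prod, mem_Iio]; omega
  calc pairGenFun t S
      ≤ pairGenFun t {pq ∈ S | C ≤ addTwoMul pq} + pairGenFun t (Iio C ×ˢ Iio C) :=
        ENNReal.tsum_indicator_le_add_of_subset hS
    _ ≤ genFun t V + genFun t (Iio C) * genFun (t ^ 2) (Iio C) :=
        add_le_add (ENNReal.tsum_indicator_comp_le hinj (hmaps.mono_left (sep_subset S _)) _)
          (pairGenFun_prod _ _).le
    _ ≤ genFun t V + C * C := by
        gcongr
        · exact genFun_Iio_le ht C
        · exact genFun_Iio_le (pow_le_one₀ zero_le ht) C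

end GenFun

def oddClass (T : Set ℕ) (i : ℕ) : Set ℕ := {p | p ∈ T ∧ Odd p ∧ p % 3 = i}

def modClass (T : Set ℕ) (j : ℕ) : Set ℕ := {q | q ∈ T ∧ q % 3 = j}

def repPairs (T : Set ℕ) (ρ : ℕ) : Set (ℕ × ℕ) :=
  {pq | pq.1 ∈ T ∧ pq.2 ∈ T ∧ addTwoMul pq % 6 = ρ}

noncomputable def classSum (P Q : ℕ → ℝ≥0∞) (ρ : ℕ) : ℝ≥0∞ :=
  ∑ j ∈ Finset.range 3, P ((ρ + j) % 3) * Q j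

section Classes

variable {T : Set ℕ}

theorem modClass_zero_subset (hT : ∀ p ∈ T, p.Prime) : modClass T 0 ⊆ {3} := fun p hp =>
  ((Nat.prime_dvd_prime_iff_eq Nat.prime_three (hT p hp.1)).mp (Nat.dvd_of_mod_eq_zero hp.2)).symm

theorem oddClass_subset_modClass (i : ℕ) : oddClass T i ⊆ modClass T i := fun _ hp => ⟨hp.1, hp.2.2⟩

theorem diff_subset_oddClass_union (hT : ∀ p ∈ T, p.Prime) :
    T \ {2, 3} ⊆ oddClass T 1 ∪ oddClass T 2 := by
  rintro p ⟨hp, hp23⟩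
  simp only [mem_insert_iff, mem_singleton_iff, not_or] at hp23
  have hp0 : p % 3 ≠ 0 := fun h0 => hp23.2 (modClass_zero_subset hT ⟨hp, h0⟩)
  have hodd := (hT p hp).odd_of_ne_two hp23.1
  rcases (by omega : p % 3 = 1 ∨ p % 3 = 2) with h | h
  · exact Or.inl ⟨hp, hodd, h⟩
  · exact Or.inr ⟨hp, hodd, h⟩

theorem repPairs_eq_biUnion {ρ : ℕ} (hρ : Odd ρ) (hρ6 : ρ < 6) :
    repPairs T ρ = ⋃ j ∈ Finset.range 3, oddClass T ((ρ + j) % 3) ×ˢ modClass T j := by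
  rw [Nat.odd_iff] at hρ
  ext ⟨p, q⟩
  simp only [repPairs, oddClass, modClass, addTwoMul, mem_ofPred_eq, mem_iUnion, mem_prod,
    Finset.mem_range, exists_prop, Nat.odd_iff]
  constructor
  · rintro ⟨hp, hq, h⟩
    exact ⟨q % 3, by omega, ⟨hp, by omega, by omega⟩, hq, rfl⟩
  · rintro ⟨j, -, ⟨hp, hp2, hpj⟩, hq, rfl⟩
    exact ⟨hp, hq, by omega⟩

theorem pairGenFun_repPairs {t : ℝ≥0∞} {ρ : ℕ} (hρ : Odd ρ) (hρ6 : ρ < 6) :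
    pairGenFun t (repPairs T ρ) =
      classSum (fun i => genFun t (oddClass T i)) (fun j => genFun (t ^ 2) (modClass T j)) ρ := by
  have hdisj : (↑(Finset.range 3) : Set ℕ).PairwiseDisjoint
      fun j => oddClass T ((ρ + j) % 3) ×ˢ modClass T j := fun i _ j _ hij =>
    disjoint_prod.mpr (Or.inr (disjoint_left.mpr fun q hi hj => hij (hi.2.symm.trans hj.2)))
  simp only [pairGenFun, classSum, repPairs_eq_biUnion hρ hρ6,
    Finset.indicator_biUnion_apply _ _ hdisj, ← pairGenFun_prod]
  exact Summable.tsum_finsetSum fun _ _ => ENNReal.summable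

end Classes

def UniqueRep (T : Set ℕ) (C : ℕ) : Prop :=
  ∀ m : ℕ, Odd m → C ≤ m → ∃! pq : ℕ × ℕ, pq.1 ∈ T ∧ pq.2 ∈ T ∧ m = pq.1 + 2 * pq.2

namespace UniqueRep

variable {T : Set ℕ} {C ρ : ℕ} {t : ℝ≥0∞}

theorem infinite (h : UniqueRep T C) : T.Infinite := fun hfin => by
  obtain ⟨b, hb⟩ := hfin.bddAbove
  obtain ⟨⟨p, q⟩, ⟨hp, hq, hm⟩, -⟩ := h (2 * (C + 2 * b) + 1) (odd_two_mul_add_one _) (by omega)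
  have := hb hp
  have := hb hq
  simp only at hm
  omega

theorem injOn_repPairs (h : UniqueRep T C) (hρ : Odd ρ) :
    InjOn addTwoMul {pq ∈ repPairs T ρ | C ≤ addTwoMul pq} := by
  rintro x ⟨⟨hx1, hx2, hxρ⟩, hxC⟩ y ⟨⟨hy1, hy2, -⟩, -⟩ hxy
  have hodd : Odd (addTwoMul x) := by rw [Nat.odd_iff] at hρ ⊢; omega
  exact (h _ hodd hxC).unique ⟨hx1, hx2, rfl⟩ ⟨hy1, hy2, hxy⟩

theorem surjOn_repPairs (h : UniqueRep T C) (hρ : Odd ρ) :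
    SurjOn addTwoMul (repPairs T ρ) {m | C ≤ m ∧ m % 6 = ρ} := by
  rintro m ⟨hC, hmρ⟩
  have hodd : Odd m := by rw [Nat.odd_iff] at hρ ⊢; omega
  obtain ⟨pq, ⟨hp, hq, rfl⟩, -⟩ := h m hodd hC
  exact ⟨pq, ⟨hp, hq, hmρ⟩, rfl⟩

theorem pairGenFun_repPairs_le (h : UniqueRep T C) (hρ : Odd ρ) (ht : t ≤ 1) :
    pairGenFun t (repPairs T ρ) ≤ genFun (t ^ 6) univ + C * C :=
  (pairGenFun_le_genFun_add ht (h.injOn_repPairs hρ) fun _ hpq => hpq.2.2).trans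
    (by gcongr; exact genFun_mod_eq_le ht ρ)

theorem pow_mul_le_pairGenFun_repPairs (h : UniqueRep T C) (hρ : Odd ρ) (hρ6 : ρ < 6)
    (ht : t ≤ 1) : t ^ (C + 6) * genFun (t ^ 6) univ ≤ pairGenFun t (repPairs T ρ) :=
  calc t ^ (C + 6) * genFun (t ^ 6) univ
      ≤ t ^ (C + (ρ + 6 - C % 6) % 6) * genFun (t ^ 6) univ := by
        gcongr ?_ * _
        exact pow_le_pow_of_le_one zero_le ht (by omega)
    _ ≤ genFun t {m | C ≤ m ∧ m % 6 = ρ} :=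
        pow_mul_genFun_univ_le (by norm_num) (by omega) (by omega)
    _ ≤ pairGenFun t (repPairs T ρ) := ENNReal.tsum_indicator_le_comp (h.surjOn_repPairs hρ) _

end UniqueRep

theorem false_of_sq_le {X Y r a b S : ℝ≥0∞} (hX0 : X ≠ 0) (hXtop : X ≠ ∞) (hY : 10 * Y ≤ 11 * X)
    (hr : 3 ≤ 4 * r ^ 2) (ha : r * X ≤ a + S) (hb : r * X ≤ b + S) (hab : 4 * (a * b) ≤ Y ^ 2)
    (hsum : a + b ≤ 2 * Y) (hS : 60 * S ≤ 6 * Y) : False := by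
  -- Over the reals: `3X² ≤ 4(a + S)(b + S) ≤ Y² + 8SY + 4S² ≤ 1.84 Y² ≤ 1.84 · 1.21 X²`.
  have key : 1080000 * X ^ 2 ≤ 801504 * X ^ 2 :=
    calc 1080000 * X ^ 2 = 360000 * (3 * X ^ 2) := by ring
      _ ≤ 360000 * (4 * ((r * X) * (r * X))) := by
        gcongr 360000 * ?_
        calc 3 * X ^ 2 ≤ 4 * r ^ 2 * X ^ 2 := by gcongr
          _ = _ := by ring
      _ ≤ 360000 * (4 * ((a + S) * (b + S))) := by gcongr
      _ = 100 * (3600 * (4 * (a * b)) + 4 * (60 * S) * (60 * (a + b)) + 4 * (60 * S) ^ 2) := by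
        ring
      _ ≤ 100 * (3600 * Y ^ 2 + 4 * (6 * Y) * (60 * (2 * Y)) + 4 * (6 * Y) ^ 2) := by gcongr
      _ = 6624 * (10 * Y) ^ 2 := by ring
      _ ≤ 6624 * (11 * X) ^ 2 := by gcongr
      _ = 801504 * X ^ 2 := by ring
  rw [ENNReal.mul_le_mul_iff_left (pow_ne_zero 2 hX0) (ENNReal.pow_ne_top hXtop)] at key
  norm_num at key

theorem false_of_classSum {P Q : ℕ → ℝ≥0∞} {X K r : ℝ≥0∞} (hX0 : X ≠ 0) (hXtop : X ≠ ∞)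
    (hK : 10 * K ≤ X) (hr : 3 ≤ 4 * r ^ 2) (hP0 : P 0 ≤ 1) (hQ0 : Q 0 ≤ 1)
    (hP : 60 ≤ P 1 + P 2) (hQ : 60 ≤ Q 1 + Q 2)
    (hle : ∀ ρ, Odd ρ → ρ < 6 → classSum P Q ρ ≤ X + K)
    (hge : ∀ ρ, Odd ρ → ρ < 6 → r * X ≤ classSum P Q ρ) : False := by
  have h1 := hle 1 (by decide) (by norm_num)
  have h3 := hle 3 (by decide) (by norm_num)
  have h5 := hle 5 (by decide) (by norm_num)
  have g1 := hge 1 (by decide) (by norm_num)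
  have g5 := hge 5 (by decide) (by norm_num)
  simp only [classSum, Finset.sum_range_succ, Finset.sum_range_zero, zero_add] at h1 h3 h5 g1 g5
  have hcd : P 1 * Q 1 + P 2 * Q 2 ≤ X + K := le_trans (by rw [add_assoc]; exact le_add_self) h3
  have ha : P 2 * Q 1 ≤ X + K := le_trans (le_add_right le_add_self) h1
  have hb : P 1 * Q 2 ≤ X + K := le_trans le_add_self h5
  set S := (P 1 + P 2) + (Q 1 + Q 2)
  refine false_of_sq_le hX0 hXtop (Y := X + K) (S := S) ?_ hr ?_ ?_ ?_
    ((add_le_add ha hb).trans_eq (two_mul _).symm) ?_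
  · calc 10 * (X + K) = 10 * X + 10 * K := by ring
      _ ≤ 10 * X + X := by gcongr
      _ = 11 * X := by ring
  · calc r * X ≤ P 1 * Q 0 + P 2 * Q 1 + P 0 * Q 2 := g1
      _ ≤ P 1 * 1 + P 2 * Q 1 + 1 * Q 2 := by gcongr
      _ = P 2 * Q 1 + (P 1 + Q 2) := by ring
      _ ≤ P 2 * Q 1 + S := by gcongr; exact add_le_add le_self_add le_add_self
  · calc r * X ≤ P 2 * Q 0 + P 0 * Q 1 + P 1 * Q 2 := g5
      _ ≤ P 2 * 1 + 1 * Q 1 + P 1 * Q 2 := by gcongr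
      _ = P 1 * Q 2 + (P 2 + Q 1) := by ring
      _ ≤ P 1 * Q 2 + S := by gcongr; exact add_le_add le_add_self le_self_add
  · calc 4 * (P 2 * Q 1 * (P 1 * Q 2)) = 4 * (P 1 * Q 1) * (P 2 * Q 2) := by ring
      _ ≤ (P 1 * Q 1 + P 2 * Q 2) ^ 2 := ENNReal.four_mul_le_sq_add _ _
      _ ≤ (X + K) ^ 2 := by gcongr
  · have hPQ : (P 1 + P 2) * (Q 1 + Q 2) ≤ 3 * (X + K) :=
      calc (P 1 + P 2) * (Q 1 + Q 2) = (P 1 * Q 1 + P 2 * Q 2) + P 2 * Q 1 + P 1 * Q 2 := by ring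
        _ ≤ (X + K) + (X + K) + (X + K) := by gcongr
        _ = 3 * (X + K) := by ring
    calc 60 * S = 60 * (P 1 + P 2) + 60 * (Q 1 + Q 2) := by ring
      _ ≤ (Q 1 + Q 2) * (P 1 + P 2) + (P 1 + P 2) * (Q 1 + Q 2) := by gcongr
      _ ≤ 3 * (X + K) + 3 * (X + K) := by rw [mul_comm]; gcongr
      _ = 6 * (X + K) := by ring

theorem not_uniqueRep {T : Set ℕ} {C : ℕ} (hT : ∀ p ∈ T, p.Prime) : ¬ UniqueRep T C := by
  intro h
  obtain ⟨F, hFT, hF⟩ := (h.infinite.sdiff (toFinite {2, 3})).exists_subset_card_eq 80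
  have hFB : ∀ p ∈ F, p ≤ F.sup id := fun p hp => Finset.le_sup (f := id) hp
  -- every power of `t` used below has exponent at most `N`, hence is at least `3 / 4`
  set N := 2 * F.sup id + 2 * (C + 6) + 6 * (14 * (C * C))
  obtain ⟨t, ht1, htN⟩ := exists_lt_one_three_le_four_mul_pow N
  have ht : t ≤ 1 := ht1.le
  have hpow : ∀ n ≤ N, 3 ≤ 4 * t ^ n := fun n hn =>
    htN.trans (by gcongr 4 * ?_; exact pow_le_pow_of_le_one zero_le ht hn)
  have hFP : ↑F ⊆ oddClass T 1 ∪ oddClass T 2 := hFT.trans (diff_subset_oddClass_union hT)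
  have hFQ : ↑F ⊆ modClass T 1 ∪ modClass T 2 :=
    hFP.trans (union_subset_union (oddClass_subset_modClass 1) (oddClass_subset_modClass 2))
  refine false_of_classSum (P := fun i => genFun t (oddClass T i))
    (Q := fun j => genFun (t ^ 2) (modClass T j)) (K := C * C) (r := t ^ (C + 6))
    genFun_univ_ne_zero
    (genFun_univ_ne_top (pow_lt_one₀ zero_le ht1 (by norm_num : (6 : ℕ) ≠ 0)))
    ?_ ?_ ?_ ?_ ?_ ?_ ?_ ?_
  · have := natCast_le_genFun (t := t ^ 6) (n := 10 * (C * C)) (F := Finset.range (14 * (C * C)))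
      (pow_le_one₀ zero_le ht) (by rw [← pow_mul]; exact hpow _ (by omega)) (subset_univ _)
      (fun x hx => (Finset.mem_range.mp hx).le) (by rw [Finset.card_range]; omega)
    exact_mod_cast this
  · rw [← pow_mul]; exact hpow _ (by omega)
  · exact genFun_le_one ht ((oddClass_subset_modClass 0).trans (modClass_zero_subset hT))
  · exact genFun_le_one (pow_le_one₀ zero_le ht) (modClass_zero_subset hT)
  · have := natCast_le_genFun (n := 60) ht (hpow _ (by omega)) hFP hFB (by omega)
    exact_mod_cast this.trans (genFun_union_le _ _)
  · have := natCast_le_genFun (t := t ^ 2) (n := 60) (pow_le_one₀ zero_le ht)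
      (by rw [← pow_mul]; exact hpow _ (by omega)) hFQ hFB (by omega)
    exact_mod_cast this.trans (genFun_union_le _ _)
  · intro ρ hρ hρ6
    exact (pairGenFun_repPairs hρ hρ6).symm.trans_le (h.pairGenFun_repPairs_le hρ ht)
  · intro ρ hρ hρ6
    exact (h.pow_mul_le_pairGenFun_repPairs hρ hρ6 ht).trans_eq (pairGenFun_repPairs hρ hρ6)

/-- There is no set `T` of primes and constant `C` such that every odd `m ≥ C` has exactly
one representation `m = p + 2q` with `p, q ∈ T`. -/
theorem no_unique_prime_representation (T : Set ℕ) (hT : ∀ p ∈ T, Nat.Prime p) (C : ℕ) :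
    ∃ m : ℕ, Odd m ∧ C ≤ m ∧
      ¬ (∃! pq : ℕ × ℕ, pq.1 ∈ T ∧ pq.2 ∈ T ∧ m = pq.1 + 2 * pq.2) := by
  by_contra! h
  exact not_uniqueRep hT h
end

section
/- Let c ≥ 3 be an odd integer and define a^{(c)}(n) = 2·m_2(n) + c for n ≥ 0. Then every odd integer N ≥ 3c can be represented in exactly one way as a sum N = a^{(c)}(k) + 2·a^{(c)}(l) with k, l nonnegative integers. -/
/-!
The identity `m_r(k) + r m_r(l) = (k mod r) + r (m_r(l) + r m_r(⌊k/r⌋))` shows that the last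
base-`r` digit of `m_r(k) + r m_r(l)` is that of `k`, and that removing it leaves the same
expression for the pair `(l, ⌊k/r⌋)`. By induction, `(k, l) ↦ m_r(k) + r m_r(l)` is a bijection
`ℕ × ℕ → ℕ`: the base-`r` digits of the value alternate between those of `k` and of `l`.
For `r = 2` the theorem is this bijectivity at `(N - 3c)/2`.
-/

theorem moser_zero (r : ℕ) : moser r 0 = 0 := by
  simp [moser]

theorem moser_eq_mod_add_mul {r : ℕ} (hr : 1 < r) (n : ℕ) :
    moser r n = n % r + r ^ 2 * moser r (n / r) := by
  rcases eq_or_ne n 0 with rfl | hn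
  · simp [moser_zero]
  have hdigits : Nat.digits r n = n % r :: Nat.digits r (n / r) := by
    conv_lhs => rw [← Nat.mod_add_div n r]
    refine Nat.digits_add r hr _ _ (Nat.mod_lt n (by omega)) ?_
    by_contra! h
    exact hn (by rw [← Nat.mod_add_div n r, h.1, h.2, mul_zero, add_zero])
  rw [moser, hdigits, Nat.ofDigits_cons, moser]

def moserInterleave (r : ℕ) (p : ℕ × ℕ) : ℕ := moser r p.1 + r * moser r p.2

section moserInterleave

variable {r : ℕ}

theorem moserInterleave_eq (hr : 1 < r) (k l : ℕ) :
    moserInterleave r (k, l) = k % r + r * moserInterleave r (l, k / r) := by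
  simp only [moserInterleave]
  rw [moser_eq_mod_add_mul hr k]
  ring

theorem moserInterleave_mod (hr : 1 < r) (p : ℕ × ℕ) :
    moserInterleave r p % r = p.1 % r := by
  rw [moserInterleave_eq hr, Nat.add_mul_mod_self_left, Nat.mod_mod]

theorem moserInterleave_div (hr : 1 < r) (p : ℕ × ℕ) :
    moserInterleave r p / r = moserInterleave r (p.2, p.1 / r) := by
  rw [moserInterleave_eq hr, Nat.add_mul_div_left _ _ (by omega), Nat.mod_div_self, zero_add]

theorem moserInterleave_eq_zero (hr : 0 < r) {p : ℕ × ℕ} (h : moserInterleave r p = 0) :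
    p = (0, 0) := by
  have hk := le_moser r p.1
  have hl := le_moser r p.2
  simp only [moserInterleave, Nat.add_eq_zero_iff, mul_eq_zero] at h
  ext <;> simp only <;> omega

theorem moserInterleave_injective (hr : 1 < r) : Function.Injective (moserInterleave r) := by
  suffices h : ∀ M p q, moserInterleave r p = M → moserInterleave r q = M → p = q from
    fun p q hpq => h _ p q rfl hpq.symm
  intro M
  induction M using Nat.strong_induction_on with
  | _ M ih =>
  rintro ⟨k, l⟩ ⟨k', l'⟩ hp hq
  rcases Nat.eq_zero_or_pos M with rfl | hM
  · exact (moserInterleave_eq_zero (by omega) hp).trans (moserInterleave_eq_zero (by omega) hq).symm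
  have hmod : k % r = k' % r := by
    rw [← moserInterleave_mod hr (k, l), ← moserInterleave_mod hr (k', l'), hp, hq]
  have hquot := ih (M / r) (Nat.div_lt_self hM hr) _ _
    ((moserInterleave_div hr (k, l)).symm.trans (congrArg (· / r) hp))
    ((moserInterleave_div hr (k', l')).symm.trans (congrArg (· / r) hq))
  obtain ⟨rfl, hdiv⟩ := Prod.mk.inj hquot
  rw [← Nat.mod_add_div k r, ← Nat.mod_add_div k' r, hmod, hdiv]

theorem moserInterleave_surjective (hr : 1 < r) : Function.Surjective (moserInterleave r) := by
  intro M
  induction M using Nat.strong_induction_on with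
  | _ M ih =>
  rcases Nat.eq_zero_or_pos M with rfl | hM
  · exact ⟨(0, 0), by simp [moserInterleave, moser_zero]⟩
  obtain ⟨⟨l, q⟩, hlq⟩ := ih (M / r) (Nat.div_lt_self hM hr)
  refine ⟨(M % r + r * q, l), ?_⟩
  have hq : (M % r + r * q) / r = q := by
    rw [Nat.add_mul_div_left _ _ (by omega), Nat.mod_div_self, zero_add]
  rw [moserInterleave_eq hr, Nat.add_mul_mod_self_left, Nat.mod_mod, hq, hlq, Nat.mod_add_div]

theorem moserInterleave_bijective (hr : 1 < r) : Function.Bijective (moserInterleave r) :=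
  ⟨moserInterleave_injective hr, moserInterleave_surjective hr⟩

end moserInterleave

theorem moser_shifted_unique_representation_general (c : ℕ) (hc : Odd c)
    (N : ℕ) (hN : Odd N) (hN3 : 3 * c ≤ N) :
    ∃! kl : ℕ × ℕ,
      N = (2 * moser 2 kl.1 + c) + 2 * (2 * moser 2 kl.2 + c) := by
  obtain ⟨M, hM⟩ : ∃ M, N = 2 * M + 3 * c := by
    obtain ⟨a, rfl⟩ := hc
    obtain ⟨b, rfl⟩ := hN
    exact ⟨b - 3 * a - 1, by omega⟩
  have hiff : ∀ kl : ℕ × ℕ, N = (2 * moser 2 kl.1 + c) + 2 * (2 * moser 2 kl.2 + c) ↔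
      moserInterleave 2 kl = M := fun kl => by
    simp only [moserInterleave]
    omega
  simpa only [hiff] using (moserInterleave_bijective one_lt_two).existsUnique M

/-- For odd `c ≥ 3`, every odd `N ≥ 3c` is uniquely a sum
`N = a^(c)(k) + 2·a^(c)(l)` where `a^(c)(n) = 2·m_2(n) + c`. -/
theorem moser_shifted_unique_representation (c : ℕ) (hc : Odd c) (hc3 : 3 ≤ c)
    (N : ℕ) (hN : Odd N) (hN3 : 3 * c ≤ N) :
    ∃! kl : ℕ × ℕ,
      N = (2 * moser 2 kl.1 + c) + 2 * (2 * moser 2 kl.2 + c) :=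
  moser_shifted_unique_representation_general c hc N hN hN3
end

section
/- Let r ≥ 2 be an integer. Every integer N with N ≡ 1 (mod r) and N ≥ r + 1 can be represented in exactly one way as a sum N = s^{(r)}_k + r·s^{(r)}_l with integers k, l ≥ 1. -/
/-!
The base-`r` digits of `m_r(a) + r·m_r(b)` are those of `a` at the even positions interleaved
with those of `b` at the odd positions, so `(a, b) ↦ m_r(a) + r·m_r(b)` is a bijection `ℕ × ℕ → ℕ`.
Since `s_k + r·s_l = r·(m_r(k-1) + r·m_r(l-1) + 1) + 1`, the representations of `N = r·Q + 1`
correspond to the preimages of `Q - 1`.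
-/

namespace Moser

variable {r : ℕ}

theorem le_moser (r n : ℕ) : n ≤ moser r n :=
  calc n = Nat.ofDigits r (Nat.digits r n) := (Nat.ofDigits_digits r n).symm
    _ ≤ moser r n := Nat.ofDigits_monotone _ (Nat.le_self_pow two_ne_zero r)

theorem moser_eq_mod_add (hr : 1 < r) (n : ℕ) :
    moser r n = n % r + r ^ 2 * moser r (n / r) := by
  rcases Nat.eq_zero_or_pos n with rfl | hn
  · simp [moser]
  · rw [moser, Nat.digits_def' hr hn, Nat.ofDigits_cons, moser]

def interleave (r : ℕ) (p : ℕ × ℕ) : ℕ := moser r p.1 + r * moser r p.2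

theorem interleave_eq_mod_add (hr : 1 < r) (a b : ℕ) :
    interleave r (a, b) = a % r + r * interleave r (b, a / r) := by
  simp only [interleave]
  rw [moser_eq_mod_add hr a]
  ring

theorem interleave_mod (hr : 1 < r) (a b : ℕ) : interleave r (a, b) % r = a % r := by
  rw [interleave_eq_mod_add hr, Nat.add_mul_mod_self_left, Nat.mod_mod]

theorem interleave_div (hr : 1 < r) (a b : ℕ) :
    interleave r (a, b) / r = interleave r (b, a / r) := by
  rw [interleave_eq_mod_add hr, Nat.add_mul_div_left _ _ (by omega),
    Nat.div_eq_of_lt (Nat.mod_lt _ (by omega)), zero_add]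

theorem interleave_eq_zero_iff (hr : 0 < r) {p : ℕ × ℕ} : interleave r p = 0 ↔ p = 0 := by
  constructor
  · intro h
    have h₁ := le_moser r p.1
    have h₂ := le_moser r p.2
    simp only [interleave, Nat.add_eq_zero_iff, mul_eq_zero, hr.ne', false_or] at h
    ext <;> simp only [Prod.fst_zero, Prod.snd_zero] <;> omega
  · rintro rfl
    simp [interleave, moser]

theorem interleave_injective (hr : 1 < r) : Function.Injective (interleave r) := by
  suffices ∀ M p q, interleave r p = M → interleave r q = M → p = q from
    fun p q h => this _ p q rfl h.symm
  intro M
  induction M using Nat.strong_induction_on with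
  | _ M ih =>
  rintro ⟨a, b⟩ ⟨a', b'⟩ hp hq
  rcases Nat.eq_zero_or_pos M with rfl | hM
  · rw [interleave_eq_zero_iff (by omega)] at hp hq
    rw [hp, hq]
  · obtain ⟨rfl, hdiv⟩ := Prod.mk.inj <| ih (M / r) (Nat.div_lt_self hM hr) _ _
      (by rw [← interleave_div hr, hp]) (by rw [← interleave_div hr, hq])
    have hmod : a % r = a' % r := by
      rw [← interleave_mod hr a b, ← interleave_mod hr a' b, hp, hq]
    rw [← Nat.div_add_mod a r, ← Nat.div_add_mod a' r, hdiv, hmod]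

theorem interleave_surjective (hr : 1 < r) : Function.Surjective (interleave r) := by
  intro M
  induction M using Nat.strong_induction_on with
  | _ M ih =>
  rcases Nat.eq_zero_or_pos M with rfl | hM
  · exact ⟨0, (interleave_eq_zero_iff (by omega)).2 rfl⟩
  · obtain ⟨⟨b, c⟩, hbc⟩ := ih (M / r) (Nat.div_lt_self hM hr)
    refine ⟨(M % r + r * c, b), ?_⟩
    rw [interleave_eq_mod_add hr, Nat.add_mul_mod_self_left, Nat.mod_mod,
      Nat.add_mul_div_left _ _ (by omega), Nat.div_eq_of_lt (Nat.mod_lt _ (by omega)), zero_add,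
      hbc, Nat.mod_add_div]

theorem interleave_bijective (hr : 1 < r) : Function.Bijective (interleave r) :=
  ⟨interleave_injective hr, interleave_surjective hr⟩

theorem moserS_add_mul_moserS (r k l : ℕ) :
    moserS r k + r * moserS r l = r * (interleave r (k - 1, l - 1) + 1) + 1 := by
  simp only [moserS, interleave]
  ring

end Moser

open Moser in
/-- For `r ≥ 2`, every `N ≡ 1 (mod r)` with `N ≥ r + 1` has a unique representation
`N = s^(r)_k + r·s^(r)_l` with `k, l ≥ 1`. -/
theorem moserS_unique_representation (r : ℕ) (hr : 2 ≤ r) (N : ℕ)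
    (hN1 : N % r = 1) (hNr : r + 1 ≤ N) :
    ∃! kl : ℕ × ℕ, 1 ≤ kl.1 ∧ 1 ≤ kl.2 ∧ N = moserS r kl.1 + r * moserS r kl.2 := by
  obtain ⟨Q, rfl⟩ : ∃ Q, N = r * Q + 1 := ⟨N / r, by rw [← hN1, Nat.div_add_mod]⟩
  have hQ : 1 ≤ Q := Nat.le_of_mul_le_mul_left (by omega : r * 1 ≤ r * Q) (by omega)
  have hrep : ∀ k l, r * Q + 1 = moserS r k + r * moserS r l ↔
      interleave r (k - 1, l - 1) = Q - 1 := by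
    intro k l
    rw [moserS_add_mul_moserS, Nat.add_right_cancel_iff, Nat.mul_left_cancel_iff (by omega)]
    omega
  obtain ⟨⟨a, b⟩, hab⟩ := (interleave_bijective hr).2 (Q - 1)
  refine ⟨(a + 1, b + 1), ⟨le_add_self, le_add_self, (hrep _ _).2 (by simpa using hab)⟩, ?_⟩
  rintro ⟨k, l⟩ ⟨hk, hl, h⟩
  have hkl := (interleave_bijective hr).1 (((hrep k l).1 h).trans hab.symm)
  simp only [Prod.mk.injEq] at hkl ⊢
  omega
end

section
/- Let r ≥ 2 be an integer, let N ≡ 1 (mod r) with N ≥ r + 1, and let N − r = Σ_{j≥0} c_j r^j be the base-r expansion of N − r (digits 0 ≤ c_j ≤ r−1). Then the indices k = 1 + Σ_{i≥0} c_{2i+1} r^i and l = 1 + Σ_{i≥0} c_{2i+2} r^i satisfy N = s^{(r)}_k + r·s^{(r)}_l (and this is the unique such representation). -/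
open Finset

lemma Nat.eq_and_eq_of_add_mul_eq_add_mul {r d d' x x' : ℕ} (hd : d < r) (hd' : d' < r)
    (h : d + r * x = d' + r * x') : d = d' ∧ x = x' := by
  have hmod : d = d' := by
    simpa [Nat.add_mul_mod_self_left, Nat.mod_eq_of_lt hd, Nat.mod_eq_of_lt hd'] using
      congrArg (· % r) h
  subst hmod
  exact ⟨rfl, Nat.eq_of_mul_eq_mul_left (by omega) (Nat.add_left_cancel h)⟩

lemma Finset.sum_range_two_mul {M : Type*} [AddCommMonoid M] (f : ℕ → M) (T : ℕ) :
    ∑ j ∈ range (2 * T), f j = ∑ i ∈ range T, (f (2 * i) + f (2 * i + 1)) := by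
  induction T with
  | zero => simp
  | succ T ih => rw [Nat.mul_succ, sum_range_succ, sum_range_succ, sum_range_succ, ih, add_assoc]

lemma Finset.sum_range_succ_mul_pow {R : Type*} [CommSemiring R] (c : ℕ → R) (x : R) (T : ℕ) :
    ∑ i ∈ range (T + 1), c i * x ^ i = c 0 + x * ∑ i ∈ range T, c (i + 1) * x ^ i := by
  rw [sum_range_succ', mul_sum, add_comm]
  simp only [pow_zero, mul_one, pow_succ']
  congr 1
  exact sum_congr rfl fun i _ => by ring

section

variable {r : ℕ}

lemma dig_lt (hr : 2 ≤ r) (n i : ℕ) : dig r n i < r := by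
  rw [dig, Nat.getD_digits n i hr]
  exact Nat.mod_lt _ (by omega)

lemma dig_zero (hr : 2 ≤ r) (n : ℕ) : dig r n 0 = n % r := by
  rw [dig, Nat.getD_digits n 0 hr, pow_zero, Nat.div_one]

lemma dig_succ (hr : 2 ≤ r) (n i : ℕ) : dig r n (i + 1) = dig r (n / r) i := by
  rw [dig, dig, Nat.getD_digits _ _ hr, Nat.getD_digits _ _ hr, pow_succ', Nat.div_div_eq_div_mul]

lemma sum_dig_mul_pow (hr : 2 ≤ r) {n L : ℕ} (hn : n < r ^ L) :
    ∑ j ∈ range L, dig r n j * r ^ j = n := by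
  induction L generalizing n with
  | zero => simp_all
  | succ L ih =>
    have hdiv : n / r < r ^ L := Nat.div_lt_of_lt_mul (by rwa [← pow_succ'])
    simp only [sum_range_succ_mul_pow, dig_succ hr, ih hdiv, dig_zero hr]
    exact Nat.mod_add_div n r

lemma moser_def' (hr : 2 ≤ r) (n : ℕ) : moser r n = n % r + r ^ 2 * moser r (n / r) := by
  rcases Nat.eq_zero_or_pos n with rfl | hn
  · simp [moser]
  · rw [moser, Nat.digits_def' hr hn, Nat.ofDigits_cons, moser]

lemma moser_add_mul (hr : 2 ≤ r) {d : ℕ} (hd : d < r) (n : ℕ) :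
    moser r (d + r * n) = d + r ^ 2 * moser r n := by
  have hr0 : 0 < r := by omega
  rw [moser_def' hr, Nat.add_mul_mod_self_left, Nat.mod_eq_of_lt hd, Nat.add_mul_div_left _ _ hr0,
    Nat.div_eq_of_lt hd, zero_add]

lemma moser_sum_mul_pow (hr : 2 ≤ r) {c : ℕ → ℕ} (hc : ∀ i, c i < r) (T : ℕ) :
    moser r (∑ i ∈ range T, c i * r ^ i) = ∑ i ∈ range T, c i * (r ^ 2) ^ i := by
  induction T generalizing c with
  | zero => simp [moser]
  | succ T ih =>
    rw [sum_range_succ_mul_pow, sum_range_succ_mul_pow, moser_add_mul hr (hc 0),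
      ih fun i => hc (i + 1)]

lemma moser_add_mul_moser_injective (hr : 2 ≤ r) {a b a' b' : ℕ}
    (h : moser r a + r * moser r b = moser r a' + r * moser r b') : a = a' ∧ b = b' := by
  by_cases h0 : a + b + a' + b' = 0
  · omega
  have hr0 : 0 < r := by omega
  have hexp : ∀ x y, moser r x + r * moser r y =
      x % r + r * (y % r + r * (moser r (x / r) + r * moser r (y / r))) := by
    intro x y
    rw [moser_def' hr x, moser_def' hr y]
    ring
  rw [hexp a b, hexp a' b'] at h
  obtain ⟨ha, h⟩ := Nat.eq_and_eq_of_add_mul_eq_add_mul (Nat.mod_lt a hr0) (Nat.mod_lt a' hr0) h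
  obtain ⟨hb, h⟩ := Nat.eq_and_eq_of_add_mul_eq_add_mul (Nat.mod_lt b hr0) (Nat.mod_lt b' hr0) h
  obtain ⟨ha', hb'⟩ := moser_add_mul_moser_injective hr h
  exact ⟨by rw [← Nat.mod_add_div a r, ha, ha', Nat.mod_add_div],
    by rw [← Nat.mod_add_div b r, hb, hb', Nat.mod_add_div]⟩
termination_by a + b + a' + b'
decreasing_by
  have hdiv : ∀ x, x / r ≤ x ∧ (0 < x → x / r < x) := fun x =>
    ⟨Nat.div_le_self x r, fun hx => Nat.div_lt_self hx (by omega)⟩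
  have := hdiv a; have := hdiv b; have := hdiv a'; have := hdiv b'
  omega

lemma moser_even_digits_add_mul_moser_odd_digits (hr : 2 ≤ r) {n T : ℕ} (hn : n < r ^ (2 * T)) :
    moser r (∑ i ∈ range T, dig r n (2 * i) * r ^ i) +
      r * moser r (∑ i ∈ range T, dig r n (2 * i + 1) * r ^ i) = n := by
  rw [moser_sum_mul_pow hr (fun i => dig_lt hr n _), moser_sum_mul_pow hr (fun i => dig_lt hr n _),
    mul_sum, ← sum_add_distrib]
  conv_rhs => rw [← sum_dig_mul_pow hr hn, sum_range_two_mul]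
  refine sum_congr rfl fun i _ => ?_
  ring

end

/-- Explicit decomposition for `s^(r)`: if `N ≡ 1 (mod r)`, `N ≥ r + 1`, and
`N − r = Σ_j c_j r^j` in base `r`, then `k = 1 + Σ c_{2i+1} r^i` and
`l = 1 + Σ c_{2i+2} r^i` give the unique representation `N = s^(r)_k + r·s^(r)_l`. -/
theorem moserS_explicit_decomposition (r : ℕ) (hr : 2 ≤ r) (N : ℕ)
    (hN1 : N % r = 1) (hNr : r + 1 ≤ N)
    (k l : ℕ)
    (hk : k = 1 + ∑ i ∈ Finset.range (N + 1), dig r (N - r) (2 * i + 1) * r ^ i)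
    (hl : l = 1 + ∑ i ∈ Finset.range (N + 1), dig r (N - r) (2 * i + 2) * r ^ i) :
    N = moserS r k + r * moserS r l ∧
      ∀ k' l' : ℕ, 1 ≤ k' → 1 ≤ l' → N = moserS r k' + r * moserS r l' →
        k' = k ∧ l' = l := by
  obtain ⟨M, hM⟩ : ∃ M, M = (N - r) / r := ⟨_, rfl⟩
  have hNM : N = r * M + r + 1 := by
    have hmod : (N - r) % r = 1 := by rwa [← Nat.add_mod_right, Nat.sub_add_cancel (by omega)]
    have := Nat.div_add_mod (N - r) r
    rw [← hM, hmod] at this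
    omega
  have hMlt : M < r ^ (2 * (N + 1)) :=
    calc M < N := by rw [hNM]; nlinarith
      _ < 2 ^ N := Nat.lt_two_pow_self
      _ ≤ r ^ (2 * (N + 1)) :=
        (Nat.pow_le_pow_left hr N).trans (Nat.pow_le_pow_right (by omega) (by omega))
  have hdig : ∀ j, dig r (N - r) (j + 1) = dig r M j := fun j => by rw [hM, dig_succ hr]
  simp only [hdig] at hk hl
  have hsplit := moser_even_digits_add_mul_moser_odd_digits hr hMlt
  refine ⟨?_, fun k' l' hk' hl' h => ?_⟩
  · rw [moserS, moserS, hk, hl, Nat.add_sub_cancel_left, Nat.add_sub_cancel_left]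
    linarith [congrArg (r * ·) hsplit]
  · rw [moserS, moserS] at h
    have hsum : moser r (k' - 1) + r * moser r (l' - 1) = M :=
      Nat.eq_of_mul_eq_mul_left (by omega : 0 < r) (by linarith)
    obtain ⟨hka, hlb⟩ := moser_add_mul_moser_injective hr (hsum.trans hsplit.symm)
    omega
end

section
/- For every odd integer N ≥ 3 one has N = W(N−2) + 2·W((N−1)/2); moreover, in the unique representation N = s^{(2)}_k + 2·s^{(2)}_l with k, l ≥ 1, the terms are s^{(2)}_k = W(N−2) and s^{(2)}_l = W((N−1)/2). -/
/-!
Let `evenBits n` be the number formed by the bits of `n` in even positions, so that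
`n = evenBits n + 2 * evenBits (n / 2)`. Since `m_2` moves bit `i` of its argument to position
`2i`, `p = m_2 a + 2 * m_2 b` forces `m_2 a = evenBits p` and `m_2 b = evenBits (p / 2)`. The
odd-position bits of an odd `M` form `2 * evenBits (M / 2)`, so `W m = 1 + 2 * evenBits ((m - 1) / 2)`.
For `N = 2p + 3` both claims thus reduce to the splitting of `p`.
-/

def evenBits (n : ℕ) : ℕ :=
  if n = 0 then 0 else n % 2 + 4 * evenBits (n / 4)
decreasing_by omega

lemma evenBits_zero : evenBits 0 = 0 := by
  rw [evenBits, if_pos rfl]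

lemma evenBits_eq (n : ℕ) : evenBits n = n % 2 + 4 * evenBits (n / 4) := by
  rcases Nat.eq_zero_or_pos n with rfl | hn
  · simp [evenBits_zero]
  · rw [evenBits, if_neg hn.ne']

lemma evenBits_add_two_mul_evenBits_div_two (p : ℕ) : evenBits p + 2 * evenBits (p / 2) = p := by
  induction p using Nat.strong_induction_on with
  | _ p ih =>
    rcases Nat.eq_zero_or_pos p with rfl | hp
    · simp [evenBits_zero]
    · have h := ih (p / 4) (by omega)
      rw [evenBits_eq p, evenBits_eq (p / 2), show p / 2 / 4 = p / 4 / 2 by omega]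
      omega

lemma moser_two_eq (n : ℕ) : moser 2 n = n % 2 + 4 * moser 2 (n / 2) := by
  rcases Nat.eq_zero_or_pos n with rfl | hn
  · simp [moser]
  · rw [moser, Nat.digits_def' (by norm_num) hn, Nat.ofDigits_cons, ← moser]
    norm_num

lemma moser_two_eq_evenBits_of_add_two_mul {a b p : ℕ} (h : moser 2 a + 2 * moser 2 b = p) :
    moser 2 a = evenBits p ∧ moser 2 b = evenBits (p / 2) := by
  induction p using Nat.strong_induction_on generalizing a b with
  | _ p ih =>
    rcases Nat.eq_zero_or_pos p with rfl | hp
    · simp only [Nat.zero_div, evenBits_zero]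
      omega
    · rw [moser_two_eq a, moser_two_eq b] at h ⊢
      obtain ⟨ha, hb⟩ := ih (p / 4) (by omega) (a := a / 2) (b := b / 2) (by omega)
      rw [evenBits_eq p, evenBits_eq (p / 2), show p / 2 / 4 = p / 4 / 2 by omega, ← ha, ← hb]
      omega

def oddPositionSum (s : ℕ) (L : List ℕ) : ℕ :=
  ((((L.zipIdx s).map Prod.swap).filter (fun p => p.1 % 2 = 1)).map (fun p => p.2 * 2 ^ p.1)).sum

lemma oddPositionSum_cons (s d : ℕ) (L : List ℕ) :
    oddPositionSum s (d :: L) = (if s % 2 = 1 then d * 2 ^ s else 0) + oddPositionSum (s + 1) L := by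
  by_cases h : s % 2 = 1 <;> simp [oddPositionSum, List.zipIdx_cons, h]

lemma oddPositionSum_digits_two (n s : ℕ) :
    oddPositionSum s (Nat.digits 2 n) =
      2 ^ s * if s % 2 = 1 then evenBits n else 2 * evenBits (n / 2) := by
  induction n using Nat.strong_induction_on generalizing s with
  | _ n ih =>
    rcases Nat.eq_zero_or_pos n with rfl | hn
    · simp [oddPositionSum, evenBits_zero]
    · rw [Nat.digits_def' (by norm_num) hn, oddPositionSum_cons, ih (n / 2) (by omega),
        evenBits_eq n, Nat.div_div_eq_div_mul, pow_succ]
      by_cases hs : s % 2 = 1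
      · rw [if_pos hs, if_neg (by omega), if_pos hs]
        ring
      · rw [if_neg hs, if_pos (by omega), if_neg hs]
        ring

lemma W_eq (m : ℕ) : W m = 1 + 2 * evenBits ((m - 1) / 2) := by
  change 1 + oddPositionSum 0 _ = _
  rw [oddPositionSum_digits_two, if_neg (by norm_num), pow_zero, one_mul]
  congr 3
  split_ifs <;> omega

/-- For every odd `N ≥ 3`, `N = W(N−2) + 2·W((N−1)/2)`; moreover, in any representation
`N = s^(2)_k + 2·s^(2)_l` with `k, l ≥ 1` (which is unique), the terms are
`s^(2)_k = W(N−2)` and `s^(2)_l = W((N−1)/2)`. -/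
theorem groer_decomposition (N : ℕ) (hN : Odd N) (hN3 : 3 ≤ N) :
    N = W (N - 2) + 2 * W ((N - 1) / 2) ∧
      ∀ k l : ℕ, 1 ≤ k → 1 ≤ l → N = moserS 2 k + 2 * moserS 2 l →
        moserS 2 k = W (N - 2) ∧ moserS 2 l = W ((N - 1) / 2) := by
  obtain ⟨p, rfl⟩ : ∃ p, N = 2 * p + 3 := ⟨(N - 3) / 2, by grind⟩
  have hW₁ : W (2 * p + 3 - 2) = 1 + 2 * evenBits p := by
    rw [W_eq]; congr 3; omega
  have hW₂ : W ((2 * p + 3 - 1) / 2) = 1 + 2 * evenBits (p / 2) := by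
    rw [W_eq]; congr 3; omega
  have hsplit := evenBits_add_two_mul_evenBits_div_two p
  refine ⟨by omega, fun k l _ _ hrep => ?_⟩
  have hp : moser 2 (k - 1) + 2 * moser 2 (l - 1) = p := by
    simp only [moserS] at hrep
    omega
  obtain ⟨hk, hl⟩ := moser_two_eq_evenBits_of_add_two_mul hp
  simp only [moserS, hW₁, hW₂, hk, hl]
  omega
end

section
/- For every integer m ≥ 1, the unique decompositions 4m−1 = s^{(2)}_{k(4m−1)} + 2·s^{(2)}_{l(4m−1)} and 4m+1 = s^{(2)}_{k(4m+1)} + 2·s^{(2)}_{l(4m+1)} satisfy l(4m+1) = l(4m−1) and k(4m+1) = k(4m−1) + 1. -/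
/-! Interleaving the base-`r` digits of `a` and `b` shows that `(a, b) ↦ m_r(a) + r·m_r(b)` is
injective, which gives the uniqueness of the decomposition `s_k + r·s_l`. With
`s_k = 2·m_2(k-1) + 1`, the equation `4m - 1 = s_{k₁} + 2·s_{l₁}` forces `m_2(k₁-1)`, hence `k₁-1`,
to be even. Then `m_2(k₁) = m_2(k₁-1) + 1`, so `s_{k₁+1} = s_{k₁} + 2` and
`4m + 1 = s_{k₁+1} + 2·s_{l₁}`; uniqueness concludes. -/

section Moser

variable {r : ℕ}

theorem moser_eq_mod_add (hr : 1 < r) (n : ℕ) :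
    moser r n = n % r + r ^ 2 * moser r (n / r) := by
  rcases Nat.eq_zero_or_pos n with rfl | hn
  · simp [moser]
  · rw [moser, Nat.digits_def' hr hn, Nat.ofDigits_cons]
    rfl

theorem self_le_moser (hr : 1 < r) (n : ℕ) : n ≤ moser r n := by
  induction n using Nat.strong_induction_on with
  | _ n ih =>
    rcases Nat.eq_zero_or_pos n with rfl | hn
    · exact Nat.zero_le _
    · have hdiv := ih (n / r) (Nat.div_lt_self hn hr)
      calc n = n % r + r * (n / r) := (Nat.mod_add_div n r).symm
        _ ≤ n % r + r ^ 2 * moser r (n / r) := by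
          have : r * (n / r) ≤ r ^ 2 * (n / r) := by gcongr; nlinarith
          have : r ^ 2 * (n / r) ≤ r ^ 2 * moser r (n / r) := by gcongr
          omega
        _ = moser r n := (moser_eq_mod_add hr n).symm

theorem moser_mod (hr : 1 < r) (n : ℕ) : moser r n % r = n % r := by
  rw [moser_eq_mod_add hr, sq, mul_assoc, Nat.add_mul_mod_self_left, Nat.mod_mod]

theorem moser_succ (hr : 1 < r) {n : ℕ} (hn : n % r + 1 < r) :
    moser r (n + 1) = moser r n + 1 := by
  obtain ⟨hdiv, hmod⟩ :=
    (Nat.div_mod_unique (a := n + 1) (d := n / r) (c := n % r + 1) (by omega)).2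
      ⟨by rw [add_right_comm, Nat.mod_add_div], hn⟩
  rw [moser_eq_mod_add hr, moser_eq_mod_add hr n, hdiv, hmod]
  ring

theorem moser_add_mul_moser_eq (hr : 1 < r) (a b : ℕ) :
    moser r a + r * moser r b =
      (a % r + r * (b % r)) + r ^ 2 * (moser r (a / r) + r * moser r (b / r)) := by
  rw [moser_eq_mod_add hr a, moser_eq_mod_add hr b]
  ring

theorem mod_add_mul_mod_lt (hr : 0 < r) (a b : ℕ) : a % r + r * (b % r) < r ^ 2 := by
  have ha := Nat.mod_lt a hr
  have hb := Nat.mod_lt b hr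
  nlinarith

theorem eq_of_mod_add_mul_mod_eq (hr : 0 < r) {a b a' b' : ℕ}
    (h : a % r + r * (b % r) = a' % r + r * (b' % r)) : a % r = a' % r ∧ b % r = b' % r := by
  have hmod := congrArg (· % r) h
  have hdiv := congrArg (· / r) h
  simp only [Nat.add_mul_mod_self_left, Nat.mod_mod, Nat.add_mul_div_left _ _ hr,
    Nat.mod_div_self, zero_add] at hmod hdiv
  exact ⟨hmod, hdiv⟩

theorem moser_add_mul_moser_injective_s15 (hr : 1 < r) :
    Function.Injective fun p : ℕ × ℕ => moser r p.1 + r * moser r p.2 := by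
  suffices key : ∀ N a b a' b', moser r a + r * moser r b = N →
      moser r a' + r * moser r b' = N → a = a' ∧ b = b' by
    rintro ⟨a, b⟩ ⟨a', b'⟩ h
    obtain ⟨rfl, rfl⟩ := key _ a b a' b' rfl h.symm
    rfl
  have hr0 : 0 < r := by omega
  intro N
  induction N using Nat.strong_induction_on with
  | _ N ih =>
    intro a b a' b' h h'
    rcases Nat.eq_zero_or_pos N with rfl | hN
    · simp only [Nat.add_eq_zero_iff, mul_eq_zero, hr0.ne', false_or] at h h'
      have := self_le_moser hr a; have := self_le_moser hr b
      have := self_le_moser hr a'; have := self_le_moser hr b'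
      omega
    · have hr2 : 0 < r ^ 2 := by positivity
      rw [moser_add_mul_moser_eq hr] at h h'
      obtain ⟨hdiv, hmod⟩ := (Nat.div_mod_unique hr2).2 ⟨h, mod_add_mul_mod_lt hr0 a b⟩
      obtain ⟨hdiv', hmod'⟩ := (Nat.div_mod_unique hr2).2 ⟨h', mod_add_mul_mod_lt hr0 a' b'⟩
      obtain ⟨ha, hb⟩ := eq_of_mod_add_mul_mod_eq hr0 (hmod.symm.trans hmod')
      obtain ⟨ha', hb'⟩ :=
        ih (N / r ^ 2) (Nat.div_lt_self hN (by nlinarith)) _ _ _ _ hdiv.symm hdiv'.symm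
      exact ⟨Nat.ext_div_modEq ha' ha, Nat.ext_div_modEq hb' hb⟩

theorem eq_of_moserS_add_mul_moserS_eq (hr : 1 < r) {k l k' l' : ℕ} (hk : 1 ≤ k) (hl : 1 ≤ l)
    (hk' : 1 ≤ k') (hl' : 1 ≤ l')
    (h : moserS r k + r * moserS r l = moserS r k' + r * moserS r l') : k = k' ∧ l = l' := by
  have hsum : r * (moser r (k - 1) + r * moser r (l - 1)) =
      r * (moser r (k' - 1) + r * moser r (l' - 1)) := by
    simp only [moserS] at h
    linarith
  have := moser_add_mul_moser_injective_s15 hr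
    (a₁ := (k - 1, l - 1)) (a₂ := (k' - 1, l' - 1)) (Nat.eq_of_mul_eq_mul_left (by omega) hsum)
  simp only [Prod.mk.injEq] at this
  omega

theorem moserS_succ (hr : 1 < r) {k : ℕ} (hk : 1 ≤ k) (h : (k - 1) % r + 1 < r) :
    moserS r (k + 1) = moserS r k + r := by
  rw [moserS, moserS, show k + 1 - 1 = k - 1 + 1 by omega, moser_succ hr h]
  ring

end Moser

theorem indices_of_consecutive_odd_general (m : ℕ)
    (k₁ l₁ k₂ l₂ : ℕ) (hk₁ : 1 ≤ k₁) (hl₁ : 1 ≤ l₁) (hk₂ : 1 ≤ k₂) (hl₂ : 1 ≤ l₂)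
    (h₁ : 4 * m - 1 = moserS 2 k₁ + 2 * moserS 2 l₁)
    (h₂ : 4 * m + 1 = moserS 2 k₂ + 2 * moserS 2 l₂) :
    l₂ = l₁ ∧ k₂ = k₁ + 1 := by
  have hk₁_pred_even : (k₁ - 1) % 2 = 0 := by
    have := moser_mod one_lt_two (k₁ - 1)
    simp only [moserS] at h₁
    omega
  have h₂' : moserS 2 k₂ + 2 * moserS 2 l₂ = moserS 2 (k₁ + 1) + 2 * moserS 2 l₁ := by
    rw [moserS_succ one_lt_two hk₁ (by omega)]
    simp only [moserS] at h₁ h₂ ⊢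
    omega
  obtain ⟨hk, hl⟩ := eq_of_moserS_add_mul_moserS_eq one_lt_two hk₂ hl₂ (by omega) hl₁ h₂'
  exact ⟨hl, hk⟩

/-- For every `m ≥ 1`, the (unique) decompositions
`4m−1 = s^(2)_{k₁} + 2·s^(2)_{l₁}` and `4m+1 = s^(2)_{k₂} + 2·s^(2)_{l₂}`
satisfy `l₂ = l₁` and `k₂ = k₁ + 1`. -/
theorem indices_of_consecutive_odd (m : ℕ) (hm : 1 ≤ m)
    (k₁ l₁ k₂ l₂ : ℕ) (hk₁ : 1 ≤ k₁) (hl₁ : 1 ≤ l₁) (hk₂ : 1 ≤ k₂) (hl₂ : 1 ≤ l₂)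
    (h₁ : 4 * m - 1 = moserS 2 k₁ + 2 * moserS 2 l₁)
    (h₂ : 4 * m + 1 = moserS 2 k₂ + 2 * moserS 2 l₂) :
    l₂ = l₁ ∧ k₂ = k₁ + 1 :=
  indices_of_consecutive_odd_general m k₁ l₁ k₂ l₂ hk₁ hl₁ hk₂ hl₂ h₁ h₂
end
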